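/- arXiv:2306.04702 — 2 statements merged into one kernel-verified Lean document; each statement's English description precedes it below -/
import Mathlib

section
/- Let Z_1, …, Z_p be independent standard Gaussian random variables, let a ≥ 1, and let ν_a = E(Z² | |Z| ≥ a) for a standard Gaussian Z. Then for every t > 0, P( Σ_{i=1}^p (Z_i² − ν_a)·1{|Z_i| ≥ a} < −t ) ≤ exp( −min( t²·e^{a²/2}/(24p), t/4 ) ). -/
/-!
With `φ(x) = exp(-x²/2)` and `Q(a) = ∫_a^∞ φ`, integration by parts expresses the truncated
moments of `Z²`, hence `ν_a = 1 + a φ(a) / Q(a)`, through `φ(a)` and `Q(a)`; Mills-ratio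
bounds on `Q` then give `ν_a ≤ a² + 2` and `E[(Z² - ν_a)² ; |Z| ≥ a] ≤ 4 φ(a)`. So every
summand `X` is centred, `X ≥ -2` and `E X² ≤ 4 φ(a)`. For `0 ≤ λ ≤ 1/2` the inequality
`eᵘ ≤ 1 + u + u²` (`u ≤ 1`) gives `E exp(-λ X) ≤ exp(4 λ² φ(a))`, and the Chernoff bound for
the independent sum, optimised over `λ ∈ [0, 1/2]`, gives the claim.
-/

open MeasureTheory ProbabilityTheory Real
open scoped ENNReal NNReal Classical

/-- `ν_a = E(Z² | |Z| ≥ a)` for a standard Gaussian `Z`. -/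
noncomputable def nuGauss (a : ℝ) : ℝ :=
  (∫ z in {z : ℝ | a ≤ |z|}, z ^ 2 ∂(gaussianReal 0 1)) /
    ((gaussianReal 0 1) {z : ℝ | a ≤ |z|}).toReal

open Filter Set Topology

lemma exp_le_one_add_add_sq {u : ℝ} (hu : u ≤ 1) : exp u ≤ 1 + u + u ^ 2 := by
  rcases le_or_gt (-1) u with h | h
  · have := (abs_le.mp (Real.abs_exp_sub_one_sub_id_le (abs_le.mpr ⟨h, hu⟩))).2
    linarith
  · nlinarith [exp_le_one_iff.mpr (h.trans (by norm_num : (-1 : ℝ) < 0)).le]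

lemma nonneg_of_hasDerivAt_nonpos_of_tendsto {F F' : ℝ → ℝ} {a : ℝ}
    (hF : ∀ x ∈ Ici a, HasDerivAt F (F' x) x) (hF' : ∀ x ∈ Ioi a, F' x ≤ 0)
    (hlim : Tendsto F atTop (𝓝 0)) : 0 ≤ F a := by
  have hanti : AntitoneOn F (Ici a) := by
    refine antitoneOn_of_hasDerivWithinAt_nonpos (f' := F') (convex_Ici a)
      (fun x hx => (hF x hx).continuousAt.continuousWithinAt) (fun x hx => ?_) ?_
    · rw [interior_Ici] at hx
      exact (hF x (mem_Ici.mpr (le_of_lt hx))).hasDerivWithinAt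
    · simpa only [interior_Ici] using hF'
  refine le_of_tendsto hlim ?_
  filter_upwards [eventually_ge_atTop a] with b hb
  exact hanti self_mem_Ici hb hb

lemma exists_neg_mul_add_sq_mul_le_neg_min {w b t : ℝ} (hb : 0 < b) (ht : 0 < t) :
    ∃ l, 0 ≤ l ∧ l ≤ b⁻¹ ∧ -l * t + l ^ 2 * w ≤ -min (t ^ 2 / (4 * w)) (t / (2 * b)) := by
  rcases le_or_gt t (2 * w / b) with htw | htw
  · have hw : 0 < w := by
      by_contra! h
      have : 2 * w / b ≤ 0 := div_nonpos_of_nonpos_of_nonneg (by linarith) hb.le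
      linarith
    refine ⟨t / (2 * w), by positivity, ?_, ?_⟩
    · rwa [div_le_iff₀ (by positivity), inv_mul_eq_div]
    · have : -(t / (2 * w)) * t + (t / (2 * w)) ^ 2 * w = -(t ^ 2 / (4 * w)) := by
        field_simp
        ring
      rw [this, neg_le_neg_iff]
      exact min_le_left _ _
  · refine ⟨b⁻¹, by positivity, le_rfl, ?_⟩
    rw [div_lt_iff₀ hb] at htw
    have : -b⁻¹ * t + b⁻¹ ^ 2 * w ≤ -(t / (2 * b)) := by
      field_simp
      nlinarith
    exact this.trans (neg_le_neg (min_le_right _ _))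

section Chernoff

variable {Ω : Type*} [MeasurableSpace Ω] {μ : Measure Ω}

lemma mgf_le_exp_sq_mul_integral_sq [IsProbabilityMeasure μ] {X : Ω → ℝ} {t : ℝ}
    (hX : MemLp X 2 μ) (hmean : ∫ ω, X ω ∂μ = 0) (hle : ∀ᵐ ω ∂μ, t * X ω ≤ 1) :
    mgf X μ t ≤ exp (t ^ 2 * ∫ ω, X ω ^ 2 ∂μ) := by
  have hX1 : Integrable X μ := hX.integrable one_le_two
  have hlin : Integrable (fun ω => 1 + t * X ω) μ := (integrable_const 1).add (hX1.const_mul t)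
  have hquad : Integrable (fun ω => 1 + t * X ω + t ^ 2 * X ω ^ 2) μ :=
    hlin.add (hX.integrable_sq.const_mul _)
  calc mgf X μ t ≤ ∫ ω, (1 + t * X ω + t ^ 2 * X ω ^ 2) ∂μ := by
        refine integral_mono_of_nonneg (ae_of_all _ fun ω => (exp_pos _).le) hquad ?_
        filter_upwards [hle] with ω hω
        nlinarith [exp_le_one_add_add_sq hω]
    _ = 1 + t ^ 2 * ∫ ω, X ω ^ 2 ∂μ := by
        rw [integral_add hlin (hX.integrable_sq.const_mul _),
          integral_add (integrable_const 1) (hX1.const_mul t), integral_const_mul,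
          integral_const_mul, hmean]
        simp
    _ ≤ exp (t ^ 2 * ∫ ω, X ω ^ 2 ∂μ) := by linarith [add_one_le_exp (t ^ 2 * ∫ ω, X ω ^ 2 ∂μ)]

lemma measureReal_sum_le_neg_le_exp {ι : Type*} [Fintype ι] {X : ι → Ω → ℝ}
    (hindep : iIndepFun X μ) (hmeas : ∀ i, AEMeasurable (X i) μ) {b l v t : ℝ} (hl : 0 ≤ l)
    (hlow : ∀ i, ∀ᵐ ω ∂μ, -b ≤ X i ω) (hmgf : ∀ i, mgf (X i) μ (-l) ≤ exp (l ^ 2 * v)) :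
    μ.real {ω | ∑ i, X i ω ≤ -t} ≤ exp (-l * t + l ^ 2 * (Fintype.card ι * v)) := by
  have := hindep.isProbabilityMeasure
  have hsum : ∀ᵐ ω ∂μ, -(Fintype.card ι * b) ≤ ∑ i, X i ω := by
    filter_upwards [ae_all_iff.mpr hlow] with ω hω
    simpa using Finset.sum_le_sum fun i (_ : i ∈ Finset.univ) => hω i
  have hint : Integrable (fun ω => exp (-l * (∑ i, X i) ω)) μ := by
    refine Integrable.of_bound (C := exp (l * (Fintype.card ι * b)))
      ((Finset.aemeasurable_sum _ fun i _ => hmeas i).const_mul _).exp.aestronglyMeasurable ?_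
    filter_upwards [hsum] with ω hω
    rw [Real.norm_eq_abs, abs_of_pos (exp_pos _), exp_le_exp, Finset.sum_apply]
    nlinarith
  calc μ.real {ω | ∑ i, X i ω ≤ -t}
      ≤ exp (-(-l) * -t) * mgf (∑ i, X i) μ (-l) := by
        simpa using measure_le_le_exp_mul_mgf (-t) (neg_nonpos.mpr hl) hint
    _ ≤ exp (-(-l) * -t) * ∏ _i : ι, exp (l ^ 2 * v) := by
        rw [hindep.mgf_sum₀ hmeas]
        gcongr with i
        · exact fun _ _ => mgf_nonneg
        · exact hmgf i
    _ = exp (-l * t + l ^ 2 * (Fintype.card ι * v)) := by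
        rw [Finset.prod_const, Finset.card_univ, ← exp_nat_mul, ← exp_add]
        ring_nf

lemma measureReal_sum_le_neg_le_exp_neg_min {ι : Type*} [Fintype ι] {X : ι → Ω → ℝ}
    (hindep : iIndepFun X μ) (hmeas : ∀ i, AEMeasurable (X i) μ)
    {b v t : ℝ} (hb : 0 < b) (ht : 0 < t) (hlow : ∀ i, ∀ᵐ ω ∂μ, -b ≤ X i ω)
    (hmgf : ∀ i l, 0 ≤ l → l ≤ b⁻¹ → mgf (X i) μ (-l) ≤ exp (l ^ 2 * v)) :
    μ.real {ω | ∑ i, X i ω ≤ -t}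
      ≤ exp (-min (t ^ 2 / (4 * (Fintype.card ι * v))) (t / (2 * b))) := by
  obtain ⟨l, hl0, hlb, hl⟩ := exists_neg_mul_add_sq_mul_le_neg_min (w := Fintype.card ι * v) hb ht
  exact (measureReal_sum_le_neg_le_exp hindep hmeas hl0 hlow fun i => hmgf i l hl0 hlb).trans
    (exp_le_exp.mpr hl)

end Chernoff

noncomputable def gaussExp (x : ℝ) : ℝ := exp (-x ^ 2 / 2)

noncomputable def gaussTail (a : ℝ) : ℝ := ∫ x in Ioi a, gaussExp x

lemma gaussExp_pos (x : ℝ) : 0 < gaussExp x := exp_pos _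

lemma continuous_gaussExp : Continuous gaussExp := by
  unfold gaussExp; fun_prop

lemma hasDerivAt_gaussExp (x : ℝ) : HasDerivAt gaussExp (-x * gaussExp x) x := by
  refine ((hasDerivAt_pow 2 x).fun_neg.div_const 2).exp.congr_deriv ?_
  simp only [gaussExp]
  ring

lemma integrable_pow_mul_gaussExp (k : ℕ) : Integrable fun x => x ^ k * gaussExp x := by
  have h := integrable_rpow_mul_exp_neg_mul_sq (b := 1 / 2) (by norm_num)
    (s := k) (neg_one_lt_zero.trans_le k.cast_nonneg)
  refine h.congr (ae_of_all _ fun x => ?_)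
  simp only [rpow_natCast, gaussExp]
  ring_nf

lemma integrable_gaussExp : Integrable gaussExp := by
  simpa using integrable_pow_mul_gaussExp 0

lemma tendsto_pow_mul_gaussExp_atTop (k : ℕ) :
    Tendsto (fun x => x ^ k * gaussExp x) atTop (𝓝 0) := by
  refine ((tendsto_rpow_abs_mul_exp_neg_mul_sq_cocompact (a := 1 / 2) (by norm_num) k).mono_left
    atTop_le_cocompact).congr' ?_
  filter_upwards [eventually_ge_atTop 0] with x hx
  simp only [abs_of_nonneg hx, rpow_natCast, gaussExp]
  ring_nf

lemma integrableOn_mul_gaussExp (s : Set ℝ) : IntegrableOn (fun x => x * gaussExp x) s := by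
  simpa using (integrable_pow_mul_gaussExp 1).integrableOn

lemma integral_Ioi_mul_gaussExp (a : ℝ) : ∫ x in Ioi a, x * gaussExp x = gaussExp a := by
  have h := integral_Ioi_of_hasDerivAt_of_tendsto' (f := fun y => -gaussExp y)
    (fun x _ => (hasDerivAt_gaussExp x).neg.congr_deriv (by ring))
    (integrableOn_mul_gaussExp (Ioi a))
    (by simpa using (tendsto_pow_mul_gaussExp_atTop 0).neg)
  simpa using h

lemma integral_Ioi_pow_add_two_mul_gaussExp (k : ℕ) (a : ℝ) :
    ∫ x in Ioi a, x ^ (k + 2) * gaussExp x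
      = a ^ (k + 1) * gaussExp a + (k + 1) * ∫ x in Ioi a, x ^ k * gaussExp x := by
  have hderiv : ∀ x ∈ Ici a, HasDerivAt (fun y => -(y ^ (k + 1) * gaussExp y))
      (x ^ (k + 2) * gaussExp x - (k + 1) * (x ^ k * gaussExp x)) x := fun x _ => by
    refine ((hasDerivAt_pow (k + 1) x).mul (hasDerivAt_gaussExp x)).neg.congr_deriv ?_
    simp only [Nat.add_sub_cancel]
    push_cast
    ring
  have hk := (integrable_pow_mul_gaussExp k).integrableOn (s := Ioi a)
  have hparts := integral_Ioi_of_hasDerivAt_of_tendsto' hderiv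
    ((integrable_pow_mul_gaussExp (k + 2)).integrableOn.sub (hk.const_mul _))
    (by simpa using (tendsto_pow_mul_gaussExp_atTop (k + 1)).neg)
  rw [integral_sub (integrable_pow_mul_gaussExp (k + 2)).integrableOn (hk.const_mul _),
    integral_const_mul] at hparts
  linarith

lemma integral_Ioi_sq_mul_gaussExp (a : ℝ) :
    ∫ x in Ioi a, x ^ 2 * gaussExp x = a * gaussExp a + gaussTail a := by
  simpa [gaussTail] using integral_Ioi_pow_add_two_mul_gaussExp 0 a

lemma integral_Ioi_pow_four_mul_gaussExp (a : ℝ) :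
    ∫ x in Ioi a, x ^ 4 * gaussExp x = a ^ 3 * gaussExp a + 3 * (a * gaussExp a + gaussTail a) := by
  rw [integral_Ioi_pow_add_two_mul_gaussExp 2, integral_Ioi_sq_mul_gaussExp]
  norm_num

lemma gaussTail_pos (a : ℝ) : 0 < gaussTail a := by
  rw [gaussTail, setIntegral_pos_iff_support_of_nonneg_ae
    (ae_of_all _ fun x => (gaussExp_pos x).le) integrable_gaussExp.integrableOn]
  simp [Function.support, (gaussExp_pos _).ne']

lemma hasDerivAt_gaussTail (x : ℝ) : HasDerivAt gaussTail (-gaussExp x) x := by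
  have h : gaussTail = fun y => gaussTail 0 - ∫ t in (0 : ℝ)..y, gaussExp t := by
    ext y
    rw [← intervalIntegral.integral_Ioi_sub_Ioi' integrable_gaussExp.integrableOn
      integrable_gaussExp.integrableOn, gaussTail, gaussTail, sub_sub_cancel]
  rw [h]
  exact (continuous_gaussExp.integral_hasStrictDerivAt 0 x).hasDerivAt.const_sub _

lemma gaussTail_le_div {a : ℝ} (ha : 0 < a) : gaussTail a ≤ gaussExp a / a := by
  have hle : gaussTail a ≤ ∫ x in Ioi a, a⁻¹ * (x * gaussExp x) := by
    refine setIntegral_mono_on integrable_gaussExp.integrableOn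
      ((integrableOn_mul_gaussExp _).const_mul _)
      measurableSet_Ioi fun x hx => ?_
    rw [← mul_assoc, inv_mul_eq_div]
    exact le_mul_of_one_le_left (gaussExp_pos x).le ((one_le_div ha).mpr (le_of_lt hx))
  rwa [integral_const_mul, integral_Ioi_mul_gaussExp, inv_mul_eq_div] at hle

lemma tendsto_gaussExp_atTop : Tendsto gaussExp atTop (𝓝 0) := by
  simpa using tendsto_pow_mul_gaussExp_atTop 0

lemma gaussTail_le_gaussExp {x : ℝ} (hx : 1 ≤ x) : gaussTail x ≤ gaussExp x :=
  (gaussTail_le_div (by linarith)).trans (div_le_self (gaussExp_pos x).le hx)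

lemma tendsto_gaussTail_atTop : Tendsto gaussTail atTop (𝓝 0) :=
  tendsto_of_tendsto_of_tendsto_of_le_of_le' tendsto_const_nhds tendsto_gaussExp_atTop
    (Eventually.of_forall fun x => (gaussTail_pos x).le)
    (by filter_upwards [eventually_ge_atTop 1] with x hx using gaussTail_le_gaussExp hx)

lemma mul_gaussExp_le_gaussTail {a : ℝ} (ha : 0 < a) :
    a * gaussExp a ≤ (a ^ 2 + 1) * gaussTail a := by
  have hderiv : ∀ x ∈ Ici a, HasDerivAt (fun y => (y ^ 2 + 1) * gaussTail y - y * gaussExp y)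
      (2 * x * gaussTail x - 2 * gaussExp x) x := fun x _ => by
    refine ((((hasDerivAt_pow 2 x).add_const 1).mul (hasDerivAt_gaussTail x)).sub
      ((hasDerivAt_id x).mul (hasDerivAt_gaussExp x))).congr_deriv ?_
    simp only [id_eq]
    push_cast
    ring
  have hderiv_nonpos : ∀ x ∈ Ioi a, 2 * x * gaussTail x - 2 * gaussExp x ≤ 0 := fun x hx => by
    have hx : 0 < x := ha.trans hx
    have := gaussTail_le_div hx
    rw [le_div_iff₀ hx] at this
    linarith
  have hlim : Tendsto (fun y => (y ^ 2 + 1) * gaussTail y - y * gaussExp y) atTop (𝓝 0) := by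
    refine tendsto_of_tendsto_of_tendsto_of_le_of_le'
      (by simpa using (tendsto_pow_mul_gaussExp_atTop 1).neg) tendsto_gaussExp_atTop ?_ ?_
    · filter_upwards [eventually_ge_atTop 0] with x hx
      nlinarith [gaussTail_pos x]
    · filter_upwards [eventually_ge_atTop 1] with x hx
      have h := gaussTail_le_div (by linarith : (0 : ℝ) < x)
      rw [le_div_iff₀ (by linarith)] at h
      nlinarith [gaussTail_pos x, gaussExp_pos x]
  linarith [nonneg_of_hasDerivAt_nonpos_of_tendsto hderiv hderiv_nonpos hlim]

lemma gaussTail_le_mul_div_pow_five {a : ℝ} (ha : 0 < a) :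
    gaussTail a ≤ gaussExp a * ((a ^ 4 - a ^ 2 + 3) / a ^ 5) := by
  have hderiv : ∀ x ∈ Ici a,
      HasDerivAt (fun y => gaussExp y * ((y ^ 4 - y ^ 2 + 3) / y ^ 5) - gaussTail y)
        (-15 * gaussExp x / x ^ 6) x := fun x hx => by
    have hx : x ≠ 0 := (ha.trans_le hx).ne'
    have hratio := (((hasDerivAt_pow 4 x).sub (hasDerivAt_pow 2 x)).add_const 3).div
      (hasDerivAt_pow 5 x) (pow_ne_zero 5 hx)
    refine (((hasDerivAt_gaussExp x).mul hratio).sub (hasDerivAt_gaussTail x)).congr_deriv ?_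
    simp only [Pi.sub_apply, Pi.div_apply]
    field_simp
    norm_num
    ring
  have hderiv_nonpos : ∀ x ∈ Ioi a, -15 * gaussExp x / x ^ 6 ≤ 0 := fun x _ =>
    div_nonpos_of_nonpos_of_nonneg (by linarith [gaussExp_pos x]) (by positivity)
  have hlim : Tendsto (fun y => gaussExp y * ((y ^ 4 - y ^ 2 + 3) / y ^ 5) - gaussTail y)
      atTop (𝓝 0) := by
    refine tendsto_of_tendsto_of_tendsto_of_le_of_le'
      (by simpa using tendsto_gaussTail_atTop.neg)
      (by simpa using tendsto_gaussExp_atTop.const_mul 3) ?_ ?_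
    · filter_upwards [eventually_gt_atTop 0] with x hx
      have : 0 ≤ (x ^ 4 - x ^ 2 + 3) / x ^ 5 :=
        div_nonneg (by nlinarith [sq_nonneg (x ^ 2 - 1)]) (by positivity)
      nlinarith [gaussExp_pos x]
    · filter_upwards [eventually_ge_atTop 1] with x hx
      have : (x ^ 4 - x ^ 2 + 3) / x ^ 5 ≤ 3 := by
        rw [div_le_iff₀ (by positivity)]
        nlinarith [one_le_pow₀ (n := 4) hx, pow_le_pow_right₀ hx (by norm_num : 4 ≤ 5)]
      nlinarith [gaussExp_pos x, gaussTail_pos x]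
  linarith [nonneg_of_hasDerivAt_nonpos_of_tendsto hderiv hderiv_nonpos hlim]

lemma gaussianPDFReal_zero_one (x : ℝ) : gaussianPDFReal 0 1 x = (√(2 * π))⁻¹ * gaussExp x := by
  simp [gaussianPDFReal, gaussExp]

lemma setIntegral_abs_ge_gaussianReal (G : ℝ → ℝ) {a : ℝ} (ha : 0 < a) :
    ∫ z in {z : ℝ | a ≤ |z|}, G |z| ∂gaussianReal 0 1
      = 2 / √(2 * π) * ∫ x in Ioi a, G x * gaussExp x := by
  have hA : MeasurableSet {z : ℝ | a ≤ |z|} := measurableSet_le measurable_const measurable_abs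
  have hpoint : ∀ z : ℝ, gaussianPDFReal 0 1 z • {z : ℝ | a ≤ |z|}.indicator (fun z => G |z|) z
      = (Ici a).indicator (fun x => (√(2 * π))⁻¹ * (G x * gaussExp x)) |z| := fun z => by
    by_cases hz : a ≤ |z|
    · rw [indicator_of_mem (show z ∈ {z : ℝ | a ≤ |z|} from hz),
        indicator_of_mem (mem_Ici.mpr hz), smul_eq_mul, gaussianPDFReal_zero_one, gaussExp, gaussExp, sq_abs]
      ring
    · rw [indicator_of_notMem (show z ∉ {z : ℝ | a ≤ |z|} from hz),
        indicator_of_notMem (show |z| ∉ Ici a from hz), smul_zero]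
  rw [← integral_indicator hA, integral_gaussianReal_eq_integral_smul one_ne_zero]
  simp_rw [hpoint]
  rw [integral_comp_abs, setIntegral_indicator measurableSet_Ici,
    inter_eq_right.mpr (Ici_subset_Ioi.mpr ha), integral_Ici_eq_integral_Ioi, integral_const_mul]
  ring

lemma gaussianReal_abs_ge_toReal {a : ℝ} (ha : 0 < a) :
    ((gaussianReal 0 1) {z : ℝ | a ≤ |z|}).toReal = 2 / √(2 * π) * gaussTail a := by
  simpa [measureReal_def, gaussTail] using setIntegral_abs_ge_gaussianReal (fun _ => 1) ha

lemma setIntegral_abs_ge_sq_gaussianReal {a : ℝ} (ha : 0 < a) :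
    ∫ z in {z : ℝ | a ≤ |z|}, z ^ 2 ∂gaussianReal 0 1
      = 2 / √(2 * π) * (a * gaussExp a + gaussTail a) := by
  have h := setIntegral_abs_ge_gaussianReal (fun x => x ^ 2) ha
  simp only [sq_abs, integral_Ioi_sq_mul_gaussExp] at h
  exact h

lemma nuGauss_mul_gaussTail {a : ℝ} (ha : 0 < a) :
    nuGauss a * gaussTail a = a * gaussExp a + gaussTail a := by
  have hc : 0 < 2 / √(2 * π) := by positivity
  rw [nuGauss, setIntegral_abs_ge_sq_gaussianReal ha, gaussianReal_abs_ge_toReal ha,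
    mul_div_mul_left _ _ hc.ne', div_mul_cancel₀ _ (gaussTail_pos a).ne']

lemma nuGauss_le {a : ℝ} (ha : 0 < a) : nuGauss a ≤ a ^ 2 + 2 := by
  have hQ := gaussTail_pos a
  have := nuGauss_mul_gaussTail ha
  have := mul_gaussExp_le_gaussTail ha
  nlinarith

lemma integral_Ioi_sq_sub_sq_mul_gaussExp (a c : ℝ) :
    ∫ x in Ioi a, (x ^ 2 - c) ^ 2 * gaussExp x
      = a ^ 3 * gaussExp a + 3 * (a * gaussExp a + gaussTail a)
        - 2 * c * (a * gaussExp a + gaussTail a) + c ^ 2 * gaussTail a := by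
  have h4 := (integrable_pow_mul_gaussExp 4).integrableOn (s := Ioi a)
  have h2 := ((integrable_pow_mul_gaussExp 2).integrableOn (s := Ioi a)).const_mul (2 * c)
  have h0 := (integrable_gaussExp.integrableOn (s := Ioi a)).const_mul (c ^ 2)
  have h42 : IntegrableOn (fun x => x ^ 4 * gaussExp x - 2 * c * (x ^ 2 * gaussExp x)) (Ioi a) :=
    h4.sub h2
  rw [setIntegral_congr_fun measurableSet_Ioi (g := fun x =>
      x ^ 4 * gaussExp x - 2 * c * (x ^ 2 * gaussExp x) + c ^ 2 * gaussExp x)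
      (fun x _ => by ring),
    integral_add h42 h0, integral_sub h4 h2, integral_const_mul, integral_const_mul,
    integral_Ioi_pow_four_mul_gaussExp, integral_Ioi_sq_mul_gaussExp, gaussTail]

-- The first-order Mills bound suffices for `a ≤ 4`; beyond, the cancellation of the leading
-- terms needs the third-order one.
lemma mul_gaussExp_sub_add_mul_gaussTail_le {a : ℝ} (ha : 1 ≤ a) :
    a * gaussExp a - a ^ 3 * gaussExp a + (a ^ 4 + 2) * gaussTail a ≤ 5 * gaussExp a := by
  have ha0 : 0 < a := by linarith
  have hE := gaussExp_pos a
  rcases le_or_gt a 4 with ha4 | ha4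
  · have hQ := gaussTail_le_div ha0
    rw [le_div_iff₀ ha0] at hQ
    refine le_of_mul_le_mul_left ?_ ha0
    nlinarith [mul_le_mul_of_nonneg_left hQ (by positivity : (0 : ℝ) ≤ a ^ 4 + 2),
      mul_nonneg (mul_nonneg (sub_nonneg.mpr ha) (sub_nonneg.mpr ha4)) hE.le]
  · have hQ := gaussTail_le_mul_div_pow_five ha0
    rw [mul_div_assoc', le_div_iff₀ (by positivity)] at hQ
    have hpoly : 0 ≤ 5 * a ^ 5 - 5 * a ^ 4 + 2 * a ^ 2 - 6 := by
      nlinarith [pow_le_pow_left₀ (by norm_num) ha4.le 4]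
    refine le_of_mul_le_mul_left ?_ (pow_pos ha0 5)
    nlinarith [mul_le_mul_of_nonneg_left hQ (by positivity : (0 : ℝ) ≤ a ^ 4 + 2),
      mul_nonneg hpoly hE.le]

noncomputable def thresholdedChiSq (a z : ℝ) : ℝ := if a ≤ |z| then z ^ 2 - nuGauss a else 0

lemma measurable_thresholdedChiSq (a : ℝ) : Measurable (thresholdedChiSq a) :=
  Measurable.ite (measurableSet_le measurable_const measurable_abs)
    ((measurable_id.pow_const 2).sub_const _) measurable_const

lemma neg_two_le_thresholdedChiSq {a : ℝ} (ha : 0 < a) (z : ℝ) : -2 ≤ thresholdedChiSq a z := by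
  unfold thresholdedChiSq
  split_ifs with hz
  · nlinarith [nuGauss_le ha, abs_nonneg z, sq_abs z]
  · norm_num

lemma thresholdedChiSq_eq_indicator (a : ℝ) :
    thresholdedChiSq a = {z : ℝ | a ≤ |z|}.indicator (fun z => z ^ 2 - nuGauss a) := by
  ext z
  simp [thresholdedChiSq, indicator]

lemma integral_thresholdedChiSq {a : ℝ} (ha : 0 < a) :
    ∫ z, thresholdedChiSq a z ∂gaussianReal 0 1 = 0 := by
  have hsq : Integrable (fun z : ℝ => z ^ 2) (gaussianReal 0 1) :=
    (memLp_id_gaussianReal 2).integrable_sq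
  have hq : ((gaussianReal 0 1) {z : ℝ | a ≤ |z|}).toReal ≠ 0 := by
    rw [gaussianReal_abs_ge_toReal ha]
    exact (mul_pos (by positivity) (gaussTail_pos a)).ne'
  rw [thresholdedChiSq_eq_indicator, integral_indicator
      (measurableSet_le measurable_const measurable_abs),
    integral_sub hsq.integrableOn (integrable_const _), setIntegral_const, smul_eq_mul,
    measureReal_def, nuGauss, mul_div_cancel₀ _ hq, sub_self]

lemma integral_thresholdedChiSq_sq_le {a : ℝ} (ha : 1 ≤ a) :
    ∫ z, thresholdedChiSq a z ^ 2 ∂gaussianReal 0 1 ≤ 4 * gaussExp a := by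
  have ha0 : 0 < a := by linarith
  have hindicator : (fun z => thresholdedChiSq a z ^ 2)
      = {z : ℝ | a ≤ |z|}.indicator (fun z => (|z| ^ 2 - nuGauss a) ^ 2) := by
    ext z
    simp [thresholdedChiSq, indicator, sq_abs]
  rw [hindicator, integral_indicator (measurableSet_le measurable_const measurable_abs),
    setIntegral_abs_ge_gaussianReal (fun x => (x ^ 2 - nuGauss a) ^ 2) ha0,
    integral_Ioi_sq_sub_sq_mul_gaussExp]
  -- the conditional mean `ν` minimises `c ↦ E[(Z² - c)² ; |Z| ≥ a]`; compare with `c = a² + 1`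
  have hmean : a ^ 3 * gaussExp a + 3 * (a * gaussExp a + gaussTail a)
        - 2 * nuGauss a * (a * gaussExp a + gaussTail a) + nuGauss a ^ 2 * gaussTail a
      = a * gaussExp a - a ^ 3 * gaussExp a + (a ^ 4 + 2) * gaussTail a
        - gaussTail a * (nuGauss a - (a ^ 2 + 1)) ^ 2 := by
    linear_combination (2 * a ^ 2 + 2 - 2 * nuGauss a) * (nuGauss_mul_gaussTail ha0).symm
  have hpi : 5 / 2 ≤ √(2 * π) :=
    le_sqrt_of_sq_le (by nlinarith [pi_gt_d2])
  have hc : 2 / √(2 * π) * 5 ≤ 4 := by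
    rw [div_mul_eq_mul_div, div_le_iff₀ (by positivity)]
    linarith
  rw [hmean]
  calc 2 / √(2 * π) * (a * gaussExp a - a ^ 3 * gaussExp a + (a ^ 4 + 2) * gaussTail a
        - gaussTail a * (nuGauss a - (a ^ 2 + 1)) ^ 2)
      ≤ 2 / √(2 * π) * (5 * gaussExp a) := by
        gcongr
        nlinarith [mul_gaussExp_sub_add_mul_gaussTail_le ha,
          mul_nonneg (gaussTail_pos a).le (sq_nonneg (nuGauss a - (a ^ 2 + 1)))]
    _ ≤ 4 * gaussExp a := by nlinarith [gaussExp_pos a]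

lemma memLp_thresholdedChiSq (a : ℝ) : MemLp (thresholdedChiSq a) 2 (gaussianReal 0 1) := by
  refine (memLp_two_iff_integrable_sq
    (measurable_thresholdedChiSq a).aestronglyMeasurable).mpr ?_
  have h4 : Integrable (fun z : ℝ => z ^ 4) (gaussianReal 0 1) := by
    simpa [Real.norm_eq_abs, pow_abs, abs_pow, (by decide : Even 4).pow_abs] using
      (memLp_id_gaussianReal 4).integrable_norm_pow' (p := 4)
  refine Integrable.mono' ((h4.const_mul 2).add (integrable_const (2 * nuGauss a ^ 2)))
    ((measurable_thresholdedChiSq a).pow_const 2).aestronglyMeasurable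
    (ae_of_all _ fun z => ?_)
  rw [Real.norm_eq_abs, abs_of_nonneg (sq_nonneg _), Pi.add_apply]
  unfold thresholdedChiSq
  split_ifs
  · nlinarith [sq_nonneg (z ^ 2 + nuGauss a)]
  · rw [zero_pow two_ne_zero]
    positivity

lemma mgf_thresholdedChiSq_comp_le {Ω : Type*} [MeasurableSpace Ω] {μ : Measure Ω}
    {Y : Ω → ℝ} (hY : μ.map Y = gaussianReal 0 1) {a l : ℝ} (ha : 1 ≤ a) (hl0 : 0 ≤ l)
    (hl : l ≤ 2⁻¹) :
    mgf (thresholdedChiSq a ∘ Y) μ (-l) ≤ exp (l ^ 2 * (4 * gaussExp a)) := by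
  have ha0 : 0 < a := by linarith
  rw [← mgf_map (AEMeasurable.of_map_ne_zero (hY ▸ IsProbabilityMeasure.ne_zero _))
    ((measurable_thresholdedChiSq a).const_mul (-l)).exp.aestronglyMeasurable, hY]
  refine (mgf_le_exp_sq_mul_integral_sq (memLp_thresholdedChiSq a)
    (integral_thresholdedChiSq ha0) (ae_of_all _ fun z => ?_)).trans ?_
  · nlinarith [neg_two_le_thresholdedChiSq ha0 z]
  · rw [neg_sq]
    exact exp_le_exp.mpr (mul_le_mul_of_nonneg_left (integral_thresholdedChiSq_sq_le ha)
      (sq_nonneg l))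

/-- Chernoff-type bound: if `Z_1, …, Z_p` are i.i.d. standard Gaussians and `a ≥ 1`, then for
every `t > 0`,
`P( Σᵢ (Zᵢ² − ν_a)·1{|Zᵢ| ≥ a} < −t ) ≤ exp(−min(t²·e^{a²/2}/(24p), t/4))`. -/
theorem thresholded_chi_sq_chernoff
    {Ω : Type*} [MeasureSpace Ω] [IsProbabilityMeasure (ℙ : Measure Ω)]
    (p : ℕ) (Z : Fin p → Ω → ℝ)
    (hindep : iIndepFun Z ℙ)
    (hlaw : ∀ i, Measure.map (Z i) ℙ = gaussianReal 0 1)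
    (a : ℝ) (ha : 1 ≤ a) (t : ℝ) (ht : 0 < t) :
    ℙ {ω | ∑ i : Fin p, (if a ≤ |Z i ω| then Z i ω ^ 2 - nuGauss a else 0) < -t}
      ≤ ENNReal.ofReal
          (Real.exp (-(min (t ^ 2 * Real.exp (a ^ 2 / 2) / (24 * p)) (t / 4)))) := by
  have hZ : ∀ i, AEMeasurable (Z i) ℙ := fun i =>
    AEMeasurable.of_map_ne_zero (hlaw i ▸ IsProbabilityMeasure.ne_zero _)
  have htail := measureReal_sum_le_neg_le_exp_neg_min
    (hindep.comp _ fun _ => measurable_thresholdedChiSq a)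
    (fun i => (measurable_thresholdedChiSq a).comp_aemeasurable (hZ i)) two_pos ht
    (fun i => ae_of_all _ fun ω => neg_two_le_thresholdedChiSq (by linarith) (Z i ω))
    fun i _ hl0 hl => mgf_thresholdedChiSq_comp_le (hlaw i) ha hl0 hl
  have hexponent : t ^ 2 * exp (a ^ 2 / 2) / (24 * p)
      ≤ t ^ 2 / (4 * (Fintype.card (Fin p) * (4 * gaussExp a))) := by
    rw [Fintype.card_fin, gaussExp, neg_div, exp_neg]
    rcases p.eq_zero_or_pos with rfl | hp
    · simp
    · have he := exp_pos (a ^ 2 / 2)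
      rw [div_le_div_iff₀ (by positivity) (by positivity)]
      field_simp
      nlinarith [sq_nonneg t]
  calc ℙ {ω | ∑ i : Fin p, (if a ≤ |Z i ω| then Z i ω ^ 2 - nuGauss a else 0) < -t}
      ≤ ℙ {ω | ∑ i, (thresholdedChiSq a ∘ Z i) ω ≤ -t} :=
        measure_mono (ofPred_subset_ofPred.mpr fun _ h => h.le)
    _ = ENNReal.ofReal (Measure.real ℙ {ω | ∑ i, (thresholdedChiSq a ∘ Z i) ω ≤ -t}) :=
        (ofReal_measureReal (measure_ne_top _ _)).symm
    _ ≤ _ := by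
        refine ENNReal.ofReal_le_ofReal (htail.trans (exp_le_exp.mpr ?_))
        norm_num only [neg_le_neg_iff]
        exact min_le_min_right _ hexponent
end

section
/- Let 𝓜 be the collection of seeded intervals generated with parameters α > 1 and K > 1 for sample size n ≥ 2. Then the number N of distinct integer triples (s, e, v) with (s,e] ∈ 𝓜 and s < v < e satisfies N < 4·(⌈1/(α−1)⌉ + log_α n)·K·n; in particular N = O(n·log n) for fixed α and K. -/
/-!
Write `l_j = seedLens α j`. Since `c = 1 / (α - 1)` is the fixed point of `x ↦ α x - 1` and
`l_{j+1} > α l_j - 1`, the excess `l_j - c` is multiplied by at least `α` at each step. As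
`l_j ≥ j + 1`, at `C = ⌈c⌉` it is already at least `α / 2`, so `α ^ (C + m + 1) ≤ 2 l_{C+m}` and
there are at most `C + log_α n` scales `l ≤ n / 2`. At scale `l` with step `s` there are at most
`(n - 2l) / s + 2` intervals, each containing `2l - 1` points `v`; since `l < 2 K s` this is less
than `4 K n`.
-/

open MeasureTheory ProbabilityTheory Real
open scoped ENNReal NNReal Classical

/-- `seedLens α j` is the paper's `l_{j+1}`. -/
noncomputable def seedLens (α : ℝ) : ℕ → ℕ
  | 0 => 1
  | j + 1 => max (seedLens α j + 1) ⌊α * (seedLens α j : ℝ)⌋₊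

/-- A pair `(s, e)` stands for the integer interval `(s, e]`. -/
noncomputable def seededIntervals (n : ℕ) (α : ℝ) (K : ℕ) : Finset (ℕ × ℕ) :=
  ((Finset.range n).filter fun j => 2 * seedLens α j ≤ n).biUnion fun j =>
    let l := seedLens α j
    let s := max 1 (l / K)
    insert (n - 2 * l, n)
      ((Finset.range ((n - 2 * l) / s + 1)).image fun i => (i * s, i * s + 2 * l))

open Finset

theorem Finset.sum_biUnion_le {ι β M : Type*} [DecidableEq β] [AddCommMonoid M] [PartialOrder M]
    [IsOrderedAddMonoid M] [CanonicallyOrderedAdd M] (s : Finset ι) (t : ι → Finset β)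
    (f : β → M) : ∑ x ∈ s.biUnion t, f x ≤ ∑ i ∈ s, ∑ x ∈ t i, f x := by
  rw [← sup_eq_biUnion]
  refine apply_sup_le_sum (f := fun u => ∑ x ∈ u, f x) sum_empty (fun {u v} => ?_) s
  rw [← sum_union_inter]
  exact le_self_add

theorem Finset.card_le_of_forall_add_one_le {s : Finset ℕ} {X : ℝ} (hX : 0 ≤ X)
    (h : ∀ j ∈ s, (j : ℝ) + 1 ≤ X) : (#s : ℝ) ≤ X := by
  have hsub : s ⊆ range ⌊X⌋₊ := fun j hj =>
    mem_range.mpr (Nat.lt_iff_add_one_le.mpr (Nat.le_floor (by exact_mod_cast h j hj)))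
  calc (#s : ℝ) ≤ ⌊X⌋₊ := by simpa using card_le_card hsub
    _ ≤ X := Nat.floor_le hX

theorem Nat.lt_two_mul_mul_max_one_div {K : ℕ} (hK : 0 < K) (l : ℕ) : l < 2 * K * max 1 (l / K) :=
  calc l < K * (l / K + 1) := Nat.lt_mul_div_succ l hK
    _ ≤ K * (2 * max 1 (l / K)) := by gcongr; omega
    _ = 2 * K * max 1 (l / K) := by ring

section SeedLens

variable {α : ℝ}

theorem seedLens_lt_succ (α : ℝ) (j : ℕ) : seedLens α j < seedLens α (j + 1) :=
  Nat.lt_iff_add_one_le.mpr (le_max_left _ _)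

theorem mul_seedLens_sub_one_lt_seedLens_succ (α : ℝ) (j : ℕ) :
    α * seedLens α j - 1 < seedLens α (j + 1) :=
  (Nat.sub_one_lt_floor _).trans_le (by exact_mod_cast le_max_right _ _)

theorem add_one_le_seedLens (α : ℝ) (j : ℕ) : j + 1 ≤ seedLens α j := by
  induction j with
  | zero => simp [seedLens]
  | succ j ih => exact Nat.le_trans (Nat.succ_le_succ ih) (seedLens_lt_succ α j)

theorem seedLens_pos (α : ℝ) (j : ℕ) : 0 < seedLens α j := (Nat.succ_pos j).trans_le (add_one_le_seedLens α j)

theorem pow_mul_seedLens_sub_le (hα : 1 < α) (C m : ℕ) :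
    α ^ m * (seedLens α C - 1 / (α - 1)) ≤ seedLens α (C + m) - 1 / (α - 1) := by
  have hα1 : α - 1 ≠ 0 := by linarith
  have hfix : α * (1 / (α - 1)) - 1 = 1 / (α - 1) := by field_simp; ring
  induction m with
  | zero => simp
  | succ m ih =>
    calc α ^ (m + 1) * (seedLens α C - 1 / (α - 1))
        = α * (α ^ m * (seedLens α C - 1 / (α - 1))) := by ring
      _ ≤ α * (seedLens α (C + m) - 1 / (α - 1)) := by gcongr
      _ ≤ seedLens α (C + m + 1) - 1 / (α - 1) := by
        have := mul_seedLens_sub_one_lt_seedLens_succ α (C + m)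
        linarith

theorem half_le_seedLens_ceil_sub (hα : 1 < α) :
    α / 2 ≤ seedLens α ⌈1 / (α - 1)⌉₊ - 1 / (α - 1) := by
  set c := 1 / (α - 1) with hc
  rcases le_or_gt α 2 with hα2 | hα2
  · have hc1 : 1 ≤ c := by rw [hc, le_div_iff₀ (by linarith)]; linarith
    have hl : (⌈c⌉₊ : ℝ) + 1 ≤ seedLens α ⌈c⌉₊ := by exact_mod_cast add_one_le_seedLens α ⌈c⌉₊
    linarith [Nat.le_ceil c]
  · have hC : ⌈c⌉₊ = 1 := by
      rw [Nat.ceil_eq_iff one_ne_zero]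
      constructor
      · simp only [Nat.sub_self, Nat.cast_zero, hc]; exact div_pos one_pos (by linarith)
      · rw [hc, Nat.cast_one, div_le_one (by linarith)]; linarith
    have h2 : (2 : ℝ) ≤ seedLens α 1 := by exact_mod_cast add_one_le_seedLens α 1
    have hα1 : α - 1 < seedLens α 1 := by simpa [seedLens] using mul_seedLens_sub_one_lt_seedLens_succ α 0
    have hc_mul : c * (α - 1) = 1 := by rw [hc]; field_simp [show α - 1 ≠ 0 by linarith]
    rw [hC]
    nlinarith

theorem pow_succ_le_two_mul_pow_ceil_mul_seedLens (hα : 1 < α) (j : ℕ) :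
    α ^ (j + 1) ≤ 2 * α ^ ⌈1 / (α - 1)⌉₊ * seedLens α j := by
  set C := ⌈1 / (α - 1)⌉₊
  have hc : 0 ≤ 1 / (α - 1) := div_nonneg zero_le_one (by linarith)
  rcases le_or_gt (j + 1) C with hjC | hCj
  · have hl : (1 : ℝ) ≤ 2 * seedLens α j := by
      have : (1 : ℝ) ≤ seedLens α j := by exact_mod_cast seedLens_pos α j
      linarith
    calc α ^ (j + 1) ≤ α ^ C := pow_le_pow_right₀ hα.le hjC
      _ ≤ α ^ C * (2 * seedLens α j) := le_mul_of_one_le_right (by positivity) hl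
      _ = 2 * α ^ C * seedLens α j := by ring
  · obtain ⟨m, rfl⟩ : ∃ m, j = C + m := ⟨j - C, by omega⟩
    calc α ^ (C + m + 1) = 2 * α ^ C * (α ^ m * (α / 2)) := by ring
      _ ≤ 2 * α ^ C * (α ^ m * (seedLens α C - 1 / (α - 1))) := by
        gcongr; exact half_le_seedLens_ceil_sub hα
      _ ≤ 2 * α ^ C * (seedLens α (C + m) - 1 / (α - 1)) := by
        gcongr; exact pow_mul_seedLens_sub_le hα C m
      _ ≤ 2 * α ^ C * seedLens α (C + m) := by gcongr; linarith

theorem add_one_le_ceil_add_logb_of_two_mul_seedLens_le (hα : 1 < α) {j n : ℕ} (hj : 2 * seedLens α j ≤ n) :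
    (j : ℝ) + 1 ≤ ⌈1 / (α - 1)⌉₊ + logb α n := by
  set C := ⌈1 / (α - 1)⌉₊
  have hn : (0 : ℝ) < n := by
    have := seedLens_pos α j
    exact_mod_cast (show 0 < n by omega)
  have hpow : α ^ (j + 1) ≤ α ^ C * n :=
    calc α ^ (j + 1) ≤ α ^ C * (2 * seedLens α j) := by
          linarith [pow_succ_le_two_mul_pow_ceil_mul_seedLens hα j]
      _ ≤ α ^ C * n := by gcongr; exact_mod_cast hj
  calc (j : ℝ) + 1 = logb α (α ^ (j + 1)) := by
        rw [logb_pow, logb_self_eq_one hα, mul_one]; push_cast; ring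
    _ ≤ logb α (α ^ C * n) := logb_le_logb_of_le hα (by positivity) hpow
    _ = C + logb α n := by
        rw [logb_mul (by positivity) hn.ne', logb_pow, logb_self_eq_one hα, mul_one]

end SeedLens

noncomputable def seededIntervalsAt (n K l : ℕ) : Finset (ℕ × ℕ) :=
  insert (n - 2 * l, n)
    ((range ((n - 2 * l) / max 1 (l / K) + 1)).image
      fun i => (i * max 1 (l / K), i * max 1 (l / K) + 2 * l))

theorem seededIntervals_eq_biUnion (n : ℕ) (α : ℝ) (K : ℕ) :
    seededIntervals n α K = ((range n).filter fun j => 2 * seedLens α j ≤ n).biUnion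
      fun j => seededIntervalsAt n K (seedLens α j) :=
  rfl

section SeededIntervalsAt

variable {n K l : ℕ}

theorem card_seededIntervalsAt_le (n K l : ℕ) : #(seededIntervalsAt n K l) ≤ (n - 2 * l) / max 1 (l / K) + 2 :=
  (card_insert_le _ _).trans (by grw [card_image_le, card_range])

theorem snd_sub_fst_of_mem_seededIntervalsAt (hl : 2 * l ≤ n) {m : ℕ × ℕ} (hm : m ∈ seededIntervalsAt n K l) :
    m.2 - m.1 = 2 * l := by
  rcases mem_insert.mp hm with rfl | hm
  · dsimp only; omega
  · obtain ⟨i, -, rfl⟩ := mem_image.mp hm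
    dsimp only; omega

theorem sum_seededIntervalsAt_lt (hK : 0 < K) (hl : 0 < l) (hln : 2 * l ≤ n) :
    ∑ m ∈ seededIntervalsAt n K l, (m.2 - m.1 - 1) < 4 * K * n := by
  obtain ⟨d, rfl⟩ : ∃ d, n = 2 * l + d := ⟨n - 2 * l, by omega⟩
  set s := max 1 (l / K)
  have hls : 2 * l - 1 ≤ 4 * K * s := by
    have : l < 2 * K * s := Nat.lt_two_mul_mul_max_one_div hK l
    rw [show 4 * K * s = 2 * (2 * K * s) by ring]
    omega
  calc ∑ m ∈ seededIntervalsAt (2 * l + d) K l, (m.2 - m.1 - 1)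
      = #(seededIntervalsAt (2 * l + d) K l) * (2 * l - 1) := by
        rw [sum_const_nat fun m hm => by rw [snd_sub_fst_of_mem_seededIntervalsAt hln hm]]
    _ ≤ (d / s + 2) * (2 * l - 1) := by
        gcongr; simpa only [Nat.add_sub_cancel_left] using card_seededIntervalsAt_le (2 * l + d) K l
    _ = d / s * (2 * l - 1) + 2 * (2 * l - 1) := by ring
    _ ≤ d / s * (4 * K * s) + 2 * (2 * l - 1) := by gcongr
    _ = 4 * K * (d / s * s) + 2 * (2 * l - 1) := by ring
    _ ≤ 4 * K * d + 2 * (2 * l - 1) := by grw [Nat.div_mul_le_self]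
    _ < 4 * K * (2 * l + d) := by
        have : 2 * (2 * l - 1) < 4 * K * (2 * l) :=
          calc 2 * (2 * l - 1) < 2 * (2 * l) := by omega
            _ ≤ 4 * K * (2 * l) := by gcongr; omega
        rw [mul_add]; omega

end SeededIntervalsAt

/-- The number `N` of distinct integer triples `(s, e, v)` with `(s, e] ∈ 𝓜` and `s < v < e`
satisfies `N < 4·(⌈1/(α−1)⌉ + log_α n)·K·n`; in particular `N = O(n log n)` for fixed `α, K`. -/
theorem seeded_intervals_triple_count
    (n : ℕ) (hn : 2 ≤ n) (α : ℝ) (K : ℕ) (hα : 1 < α) (hK : 1 < K) :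
    ((∑ m ∈ seededIntervals n α K, (m.2 - m.1 - 1) : ℕ) : ℝ)
      < 4 * ((⌈1 / (α - 1)⌉₊ : ℝ) + Real.logb α (n : ℝ)) * (K : ℝ) * (n : ℝ) := by
  set F := (range n).filter fun j => 2 * seedLens α j ≤ n
  set X := (⌈1 / (α - 1)⌉₊ : ℝ) + Real.logb α (n : ℝ)
  have hjX : ∀ j ∈ F, (j : ℝ) + 1 ≤ X := fun j hj =>
    add_one_le_ceil_add_logb_of_two_mul_seedLens_le hα (mem_filter.mp hj).2
  have h0F : 0 ∈ F := mem_filter.mpr ⟨mem_range.mpr (by omega), by simpa [seedLens] using hn⟩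
  have hF : (#F : ℝ) ≤ X := Finset.card_le_of_forall_add_one_le (by linarith [hjX 0 h0F]) hjX
  have hsum : ∑ m ∈ seededIntervals n α K, (m.2 - m.1 - 1) < #F * (4 * K * n) :=
    calc _ ≤ ∑ j ∈ F, ∑ m ∈ seededIntervalsAt n K (seedLens α j), (m.2 - m.1 - 1) := by
          rw [seededIntervals_eq_biUnion]; exact sum_biUnion_le _ _ _
      _ < ∑ j ∈ F, 4 * K * n := sum_lt_sum_of_nonempty ⟨0, h0F⟩ fun j hj =>
          sum_seededIntervalsAt_lt (by omega) (seedLens_pos α j) (mem_filter.mp hj).2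
      _ = #F * (4 * K * n) := by rw [sum_const, smul_eq_mul]
  calc ((∑ m ∈ seededIntervals n α K, (m.2 - m.1 - 1) : ℕ) : ℝ)
      < #F * (4 * K * n) := by exact_mod_cast hsum
    _ ≤ X * (4 * K * n) := by gcongr
    _ = 4 * X * K * n := by ring
end
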